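/- Comparison of group and population mean imputations' fairness gaps (Theorem 3): under the assumptions Var(X | {O=0} ∩ G) = Var(X | {O=0} ∩ Gᶜ) and μ_g^O > μ^O, both imputation strategies penalise the marginalised group and the reconstruction gap is larger for group imputation than for population imputation, i.e. Δ^{group}_g > Δ^{pop}_g > 0, if and only if either (F > R_F and E > R_E and H > R_H) or (F > R_F and E < R_E and H < R_H), where F = ρ_g·σ_{X|G}·f(α_g, r_g, α_{¬g}) + ρ_{¬g}·σ_{X|Gᶜ}·f(α_{¬g}, 1−r_g, α_g), R_F = ((1−r_g)·α_{¬g} − r_g·α_g)·(μ_g − μ_{¬g}), E = ρ_g·σ_{X|G}·e(α_g) − ρ_{¬g}·σ_{X|Gᶜ}·e(α_{¬g}), R_E = μ_g − μ_{¬g}, H = ρ_g·σ_{X|G}·h(α_g, r_g, α_{¬g}) + ρ_{¬g}·σ_{X|Gᶜ}·h(α_{¬g}, 1−r_g, α_g), and R_H = ((1−r_g)·α_{¬g} − r_g·α_g)·(μ_g − μ_{¬g}). -/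

import Mathlib

/-!
Split every group by the observation indicator and write `N_g`, `N_{¬g}` for the means of the
unobserved part. For a `0`-`1` valued `O`, `μ_g = α_g μ_g^O + (1 - α_g) N_g` and
`Cov(O, X | G) = α_g (1 - α_g) (μ_g^O - N_g)`, so `ρ_g σ_{X|G} = √(α_g (1 - α_g)) (μ_g^O - N_g)` and
all square roots in `f`, `e`, `h` cancel. Each reconstruction error is the unobserved variance plus
the squared bias, so the equal variances cancel from both gaps. With `p = r_g α_g`,
`q = (1 - r_g) α_{¬g}` one has `(p + q) μ^O = p μ_g^O + q μ_{¬g}^O`, and then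
`(p + q) (Δ^group - Δ^pop) = (μ_g^O - μ_{¬g}^O) (F - R_F)` and
`(p + q) Δ^pop = (E - R_E) (H - R_H)`, while `μ_g^O > μ^O` forces `μ_g^O > μ_{¬g}^O`.
-/

open MeasureTheory ProbabilityTheory

-- Definitionally `cov[O, X; μ]`, so the covariance lemmas below apply to it.
noncomputable def condCov {Ω : Type*} [MeasurableSpace Ω] (μ : Measure Ω) (O X : Ω → ℝ) : ℝ :=
  ∫ ω, (O ω - ∫ x, O x ∂μ) * (X ω - ∫ x, X x ∂μ) ∂μ

section ConditionalMoments

variable {Ω : Type*} [MeasurableSpace Ω] {μ : Measure Ω} {X : Ω → ℝ} {s t : Set Ω}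

theorem MeasureTheory.MemLp.cond {p : ENNReal} (hX : MemLp X p μ) (hs : μ s ≠ 0) :
    MemLp X p μ[|s] :=
  (hX.restrict s).smul_measure (ENNReal.inv_ne_top.mpr hs)

theorem MeasureTheory.Integrable.cond (hX : Integrable X μ) (hs : μ s ≠ 0) : Integrable X μ[|s] :=
  (hX.restrict).smul_measure (ENNReal.inv_ne_top.mpr hs)

theorem measureReal_mul_integral_cond (hs : μ s ≠ ⊤) :
    μ.real s * ∫ x, X x ∂μ[|s] = ∫ x in s, X x ∂μ := by
  rcases eq_or_ne (μ s) 0 with h0 | h0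
  · simp [Measure.restrict_eq_zero.mpr h0, measureReal_def, h0]
  · rw [ProbabilityTheory.cond, integral_smul_measure, smul_eq_mul, ← mul_assoc, measureReal_def,
      ENNReal.toReal_inv, mul_inv_cancel₀ (ENNReal.toReal_ne_zero.mpr ⟨h0, hs⟩), one_mul]

theorem measureReal_mul_integral_cond_eq_add [IsFiniteMeasure μ] (hs : MeasurableSet s)
    (hX : Integrable X μ) :
    μ.real t * ∫ x, X x ∂μ[|t] =
      μ.real (t ∩ s) * ∫ x, X x ∂μ[|t ∩ s] + μ.real (t ∩ sᶜ) * ∫ x, X x ∂μ[|t ∩ sᶜ] := by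
  simp only [measureReal_mul_integral_cond (measure_ne_top _ _)]
  exact (integral_inter_add_sdiff hs hX.integrableOn).symm

theorem integral_eq_add_integral_cond_compl [IsProbabilityMeasure μ] (ht : MeasurableSet t)
    (hX : Integrable X μ) :
    ∫ x, X x ∂μ = μ.real t * ∫ x, X x ∂μ[|t] + (1 - μ.real t) * ∫ x, X x ∂μ[|tᶜ] := by
  rw [← probReal_compl_eq_one_sub ht, measureReal_mul_integral_cond (measure_ne_top _ _),
    measureReal_mul_integral_cond (measure_ne_top _ _), integral_add_compl ht hX]

theorem covariance_indicator_one_eq [IsProbabilityMeasure μ] (ht : MeasurableSet t)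
    (hX : MemLp X 2 μ) :
    cov[t.indicator 1, X; μ] =
      μ.real t * (1 - μ.real t) * (∫ x, X x ∂μ[|t] - ∫ x, X x ∂μ[|tᶜ]) := by
  have hind : MemLp (t.indicator (1 : Ω → ℝ)) 2 μ :=
    memLp_indicator_const 2 ht 1 (Or.inr (measure_ne_top μ t))
  have hmul : t.indicator 1 * X = t.indicator X := by
    ext x
    by_cases hx : x ∈ t <;> simp [hx]
  rw [covariance_eq_sub hind hX, hmul, integral_indicator ht, integral_indicator_one ht,
    ← measureReal_mul_integral_cond (measure_ne_top _ _),
    integral_eq_add_integral_cond_compl ht (hX.integrable one_le_two)]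
  ring

theorem integral_sub_sq_eq_variance_add [IsProbabilityMeasure μ] (hX : MemLp X 2 μ) (c : ℝ) :
    ∫ x, (c - X x) ^ 2 ∂μ = Var[X; μ] + (c - ∫ x, X x ∂μ) ^ 2 := by
  have hcX : MemLp (fun x => c - X x) 2 μ := (memLp_const c).sub hX
  rw [← variance_const_sub hX.aestronglyMeasurable c, variance_eq_sub hcX,
    integral_sub (integrable_const c) (hX.integrable one_le_two)]
  simp

end ConditionalMoments

section BinaryIndicator

theorem indicator_preimage_one_eq {Ω : Type*} {O : Ω → ℝ} (hO01 : ∀ ω, O ω = 0 ∨ O ω = 1) :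
    (O ⁻¹' {1}).indicator 1 = O := by
  ext ω
  rcases hO01 ω with h | h <;> simp [h]

theorem preimage_zero_eq_compl_preimage_one {Ω : Type*} {O : Ω → ℝ}
    (hO01 : ∀ ω, O ω = 0 ∨ O ω = 1) : O ⁻¹' {0} = (O ⁻¹' {1})ᶜ := by
  ext ω
  rcases hO01 ω with h | h <;> simp [h]

variable {Ω : Type*} [MeasurableSpace Ω] {μ : Measure Ω} {X O : Ω → ℝ} {s : Set Ω}
  (hO : Measurable O) (hO01 : ∀ ω, O ω = 0 ∨ O ω = 1)
include hO hO01

theorem integral_eq_measureReal_preimage_one : ∫ x, O x ∂μ = μ.real (O ⁻¹' {1}) := by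
  rw [← integral_indicator_one (hO (measurableSet_singleton 1)), indicator_preimage_one_eq hO01]

theorem measureReal_preimage_one_inter [IsFiniteMeasure μ] :
    μ.real (O ⁻¹' {1} ∩ s) = μ.real s * ∫ x, O x ∂μ[|s] := by
  rw [measureReal_mul_integral_cond (measure_ne_top _ _),
    integral_eq_measureReal_preimage_one hO hO01,
    measureReal_restrict_apply (hO (measurableSet_singleton 1))]

theorem integral_cond_eq_of_binary [IsFiniteMeasure μ] (hs : MeasurableSet s) (hμs : μ s ≠ 0)
    (hX : Integrable X μ) :
    ∫ x, X x ∂μ[|s] = (∫ x, O x ∂μ[|s]) * ∫ x, X x ∂μ[|O ⁻¹' {1} ∩ s] +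
      (1 - ∫ x, O x ∂μ[|s]) * ∫ x, X x ∂μ[|O ⁻¹' {0} ∩ s] := by
  have := cond_isProbabilityMeasure hμs
  have hT := hO (measurableSet_singleton 1)
  rw [integral_eq_measureReal_preimage_one hO hO01, preimage_zero_eq_compl_preimage_one hO01,
    Set.inter_comm _ s, Set.inter_comm _ s, ← cond_cond_eq_cond_inter hs hT,
    ← cond_cond_eq_cond_inter hs hT.compl]
  exact integral_eq_add_integral_cond_compl hT (hX.cond hμs)

theorem covariance_cond_eq_of_binary [IsFiniteMeasure μ] (hs : MeasurableSet s) (hμs : μ s ≠ 0)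
    (hX : MemLp X 2 μ) :
    cov[O, X; μ[|s]] = (∫ x, O x ∂μ[|s]) * (1 - ∫ x, O x ∂μ[|s]) *
      (∫ x, X x ∂μ[|O ⁻¹' {1} ∩ s] - ∫ x, X x ∂μ[|O ⁻¹' {0} ∩ s]) := by
  have := cond_isProbabilityMeasure hμs
  have hT := hO (measurableSet_singleton 1)
  rw [integral_eq_measureReal_preimage_one hO hO01, preimage_zero_eq_compl_preimage_one hO01,
    Set.inter_comm _ s, Set.inter_comm _ s, ← cond_cond_eq_cond_inter hs hT,
    ← cond_cond_eq_cond_inter hs hT.compl, ← covariance_indicator_one_eq hT (hX.cond hμs),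
    indicator_preimage_one_eq hO01]

theorem measureReal_mul_integral_cond_preimage_one [IsProbabilityMeasure μ] (hs : MeasurableSet s)
    (hX : Integrable X μ) :
    (μ.real s * ∫ x, O x ∂μ[|s] + (1 - μ.real s) * ∫ x, O x ∂μ[|sᶜ]) * ∫ x, X x ∂μ[|O ⁻¹' {1}] =
      μ.real s * (∫ x, O x ∂μ[|s]) * ∫ x, X x ∂μ[|O ⁻¹' {1} ∩ s] +
        (1 - μ.real s) * (∫ x, O x ∂μ[|sᶜ]) * ∫ x, X x ∂μ[|O ⁻¹' {1} ∩ sᶜ] := by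
  rw [← probReal_compl_eq_one_sub hs, ← measureReal_preimage_one_inter hO hO01,
    ← measureReal_preimage_one_inter hO hO01, ← Set.sdiff_eq,
    measureReal_inter_add_sdiff hs, Set.sdiff_eq]
  exact measureReal_mul_integral_cond_eq_add hs hX

end BinaryIndicator

section Algebra

theorem Real.sqrt_mul_mul_sqrt_div {x y : ℝ} (hx : 0 < x) (hy : 0 ≤ y) :
    √(x * y) * √(y / x) = y := by
  rw [← Real.sqrt_mul (by positivity), show x * y * (y / x) = y * y by field_simp,
    Real.sqrt_mul_self hy]

theorem mul_eq_sqrt_mul_of_eq_div {ρ σ c x D : ℝ} (hσ : σ ≠ 0) (hρ : ρ = c / (√x * σ))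
    (hc : c = x * D) : ρ * σ = √x * D := by
  rw [hρ, hc, div_mul_eq_mul_div, mul_div_mul_right _ _ hσ, mul_div_right_comm, Real.div_sqrt]

variable {a : ℝ}

theorem sqrt_mul_one_sub_mul_sub_eq (ha0 : 0 < a) (ha1 : a < 1) (D u w : ℝ) :
    √(a * (1 - a)) * D * (u / √(a * (1 - a)) - √((1 - a) / a) * w) = D * (u - (1 - a) * w) := by
  have hsq : √(a * (1 - a)) ≠ 0 := (Real.sqrt_pos.mpr (by nlinarith)).ne'
  have := Real.sqrt_mul_mul_sqrt_div ha0 (sub_nonneg.mpr ha1.le)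
  field_simp
  linear_combination (-(D * w)) * this

theorem sqrt_mul_one_sub_mul_sqrt_div_eq (ha0 : 0 < a) (ha1 : a < 1) (D : ℝ) :
    √(a * (1 - a)) * D * √(a / (1 - a)) = a * D := by
  have := Real.sqrt_mul_mul_sqrt_div (sub_pos.mpr ha1) ha0.le
  rw [mul_comm a, mul_right_comm, this]

theorem gap_iff_of_factorization {ΔG ΔP F RF E RE H RH c s : ℝ} (hc : 0 < c) (hs : 0 < s)
    (hG : s * (ΔG - ΔP) = c * (F - RF)) (hP : s * ΔP = (E - RE) * (H - RH)) :
    (ΔG > ΔP ∧ ΔP > 0) ↔ (F > RF ∧ E > RE ∧ H > RH) ∨ (F > RF ∧ E < RE ∧ H < RH) := by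
  have hG' : ΔG > ΔP ↔ F > RF := by
    rw [gt_iff_lt, ← sub_pos, ← mul_pos_iff_of_pos_left hs, hG, mul_pos_iff_of_pos_left hc,
      sub_pos]
  have hP' : ΔP > 0 ↔ (E > RE ∧ H > RH) ∨ (E < RE ∧ H < RH) := by
    rw [gt_iff_lt, ← mul_pos_iff_of_pos_left hs, hP, mul_pos_iff, sub_pos, sub_pos, sub_neg,
      sub_neg]
  rw [hG', hP']
  tauto

theorem gap_iff_of_weighted_means {p q Mg Mn Ng Nn m ΔG ΔP F RF E RE H RH : ℝ}
    (hp : 0 < p) (hq : 0 < q) (hm : (p + q) * m = p * Mg + q * Mn)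
    (hΔG : ΔG = (Mg - Ng) ^ 2 - (Mn - Nn) ^ 2) (hΔP : ΔP = (m - Ng) ^ 2 - (m - Nn) ^ 2)
    (hFR : F - RF = (p + q) * (Mg + Mn) - 2 * q * Ng - 2 * p * Nn) (hER : E - RE = Nn - Ng)
    (hHR : H - RH = 2 * (p * Mg + q * Mn) - (p + q) * (Ng + Nn)) (hmean : Mg > m) :
    (ΔG > ΔP ∧ ΔP > 0) ↔ (F > RF ∧ E > RE ∧ H > RH) ∨ (F > RF ∧ E < RE ∧ H < RH) := by
  have hMM : 0 < Mg - Mn := by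
    have : 0 < q * (Mg - Mn) := by nlinarith [mul_pos (add_pos hp hq) (sub_pos.mpr hmean)]
    exact pos_of_mul_pos_right this hq.le
  refine gap_iff_of_factorization hMM (add_pos hp hq) ?_ ?_
  · rw [hΔG, hΔP, hFR]
    linear_combination 2 * (Ng - Nn) * hm
  · rw [hΔP, hER, hHR]
    linear_combination 2 * (Nn - Ng) * hm

end Algebra

theorem fairness_gap_comparison_of_means
    {a b r Mg Mn Ng Nn μg μng μO κg κn ΔGroup ΔPop F RF E RE H RH : ℝ}
    {f : ℝ → ℝ → ℝ → ℝ} {e : ℝ → ℝ} {h : ℝ → ℝ → ℝ → ℝ}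
    (hf : ∀ a r b, f a r b =
      2 * b * (1 - r) / √(a * (1 - a)) -
        √((1 - a) / a) * (b * (1 - r) - a * r))
    (he : ∀ a, e a = √(a / (1 - a)))
    (hh : ∀ a r b, h a r b =
      (a * r + b * (1 - r)) / √(a * (1 - a)) -
        √((1 - a) / a) * (b * (1 - r) - a * r))
    (ha0 : 0 < a) (ha1 : a < 1) (hb0 : 0 < b) (hb1 : b < 1) (hr0 : 0 < r) (hr1 : r < 1)
    (hκg : κg = √(a * (1 - a)) * (Mg - Ng)) (hκn : κn = √(b * (1 - b)) * (Mn - Nn))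
    (hμg : μg = a * Mg + (1 - a) * Ng) (hμng : μng = b * Mn + (1 - b) * Nn)
    (hμO : (r * a + (1 - r) * b) * μO = r * a * Mg + (1 - r) * b * Mn)
    (hΔGroup : ΔGroup = (Mg - Ng) ^ 2 - (Mn - Nn) ^ 2)
    (hΔPop : ΔPop = (μO - Ng) ^ 2 - (μO - Nn) ^ 2)
    (hF : F = κg * f a r b + κn * f b (1 - r) a) (hRF : RF = ((1 - r) * b - r * a) * (μg - μng))
    (hE : E = κg * e a - κn * e b) (hRE : RE = μg - μng)
    (hH : H = κg * h a r b + κn * h b (1 - r) a) (hRH : RH = ((1 - r) * b - r * a) * (μg - μng))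
    (hmean : Mg > μO) :
    (ΔGroup > ΔPop ∧ ΔPop > 0) ↔
      (F > RF ∧ E > RE ∧ H > RH) ∨ (F > RF ∧ E < RE ∧ H < RH) := by
  refine gap_iff_of_weighted_means (mul_pos hr0 ha0) (mul_pos (sub_pos.mpr hr1) hb0) hμO
    hΔGroup hΔPop ?_ ?_ ?_ hmean
  · rw [hF, hRF, hκg, hκn, hf, hf, sqrt_mul_one_sub_mul_sub_eq ha0 ha1,
      sqrt_mul_one_sub_mul_sub_eq hb0 hb1, hμg, hμng]
    ring
  · rw [hE, hRE, hκg, hκn, he, he, sqrt_mul_one_sub_mul_sqrt_div_eq ha0 ha1,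
      sqrt_mul_one_sub_mul_sqrt_div_eq hb0 hb1, hμg, hμng]
    ring
  · rw [hH, hRH, hκg, hκn, hh, hh, sqrt_mul_one_sub_mul_sub_eq ha0 ha1,
      sqrt_mul_one_sub_mul_sub_eq hb0 hb1, hμg, hμng]
    ring

theorem fairness_gap_comparison_general
    {Ω : Type*} [MeasurableSpace Ω] (μ : Measure Ω) [IsProbabilityMeasure μ]
    (X O : Ω → ℝ) (G : Set Ω)
    (hOm : Measurable O) (hG : MeasurableSet G)
    (hX2 : MemLp X 2 μ)
    (hO01 : ∀ ω, O ω = 0 ∨ O ω = 1)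
    (αg αng μg μng μgO μngO μO σXG σXnG ρg ρng rg
      LgGroup LngGroup LgPop LngPop ΔGroup ΔPop F RF E RE H RH : ℝ)
    (f : ℝ → ℝ → ℝ → ℝ) (e : ℝ → ℝ) (h : ℝ → ℝ → ℝ → ℝ)
    (hαg : αg = ∫ ω, O ω ∂(μ[|G]))
    (hαng : αng = ∫ ω, O ω ∂(μ[|Gᶜ]))
    (hμg : μg = ∫ ω, X ω ∂(μ[|G]))
    (hμng : μng = ∫ ω, X ω ∂(μ[|Gᶜ]))
    (hμgO : μgO = ∫ ω, X ω ∂(μ[|O ⁻¹' {1} ∩ G]))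
    (hμngO : μngO = ∫ ω, X ω ∂(μ[|O ⁻¹' {1} ∩ Gᶜ]))
    (hμO : μO = ∫ ω, X ω ∂(μ[|O ⁻¹' {1}]))
    (hρg : ρg = condCov (μ[|G]) O X / (Real.sqrt (αg * (1 - αg)) * σXG))
    (hρng : ρng = condCov (μ[|Gᶜ]) O X / (Real.sqrt (αng * (1 - αng)) * σXnG))
    (hrg : rg = (μ G).toReal)
    (hLgGroup : LgGroup = ∫ ω, (μgO - X ω) ^ 2 ∂(μ[|O ⁻¹' {0} ∩ G]))
    (hLngGroup : LngGroup = ∫ ω, (μngO - X ω) ^ 2 ∂(μ[|O ⁻¹' {0} ∩ Gᶜ]))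
    (hLgPop : LgPop = ∫ ω, (μO - X ω) ^ 2 ∂(μ[|O ⁻¹' {0} ∩ G]))
    (hLngPop : LngPop = ∫ ω, (μO - X ω) ^ 2 ∂(μ[|O ⁻¹' {0} ∩ Gᶜ]))
    (hΔGroup : ΔGroup = LgGroup - LngGroup)
    (hΔPop : ΔPop = LgPop - LngPop)
    (hf : ∀ a r b, f a r b =
      2 * b * (1 - r) / Real.sqrt (a * (1 - a)) -
        Real.sqrt ((1 - a) / a) * (b * (1 - r) - a * r))
    (he : ∀ a, e a = Real.sqrt (a / (1 - a)))
    (hh : ∀ a r b, h a r b =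
      (a * r + b * (1 - r)) / Real.sqrt (a * (1 - a)) -
        Real.sqrt ((1 - a) / a) * (b * (1 - r) - a * r))
    (hF : F = ρg * σXG * f αg rg αng + ρng * σXnG * f αng (1 - rg) αg)
    (hRF : RF = ((1 - rg) * αng - rg * αg) * (μg - μng))
    (hE : E = ρg * σXG * e αg - ρng * σXnG * e αng)
    (hRE : RE = μg - μng)
    (hH : H = ρg * σXG * h αg rg αng + ρng * σXnG * h αng (1 - rg) αg)
    (hRH : RH = ((1 - rg) * αng - rg * αg) * (μg - μng))
    (hr0 : 0 < rg) (hr1 : rg < 1)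
    (hαg0 : 0 < αg) (hαg1 : αg < 1)
    (hαng0 : 0 < αng) (hαng1 : αng < 1)
    (hσpos : 0 < σXG) (hσnpos : 0 < σXnG)
    (hpos1g : 0 < μ (O ⁻¹' {1} ∩ G)) (hpos0g : 0 < μ (O ⁻¹' {0} ∩ G))
    (hpos1ng : 0 < μ (O ⁻¹' {1} ∩ Gᶜ)) (hpos0ng : 0 < μ (O ⁻¹' {0} ∩ Gᶜ))
    (hvar : variance X (μ[|O ⁻¹' {0} ∩ G]) = variance X (μ[|O ⁻¹' {0} ∩ Gᶜ]))
    (hmean : μgO > μO) :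
    (ΔGroup > ΔPop ∧ ΔPop > 0) ↔
      (F > RF ∧ E > RE ∧ H > RH) ∨ (F > RF ∧ E < RE ∧ H < RH) := by
  have hμG : μ G ≠ 0 := (hpos1g.trans_le (measure_mono Set.inter_subset_right)).ne'
  have hμGc : μ Gᶜ ≠ 0 := (hpos1ng.trans_le (measure_mono Set.inter_subset_right)).ne'
  have hL (c : ℝ) {A : Set Ω} (hA : μ A ≠ 0) : ∫ ω, (c - X ω) ^ 2 ∂μ[|A] =
      Var[X; μ[|A]] + (c - ∫ ω, X ω ∂μ[|A]) ^ 2 :=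
    have := cond_isProbabilityMeasure hA
    integral_sub_sq_eq_variance_add (hX2.cond hA) c
  refine fairness_gap_comparison_of_means (Mn := μngO) (Ng := ∫ ω, X ω ∂μ[|O ⁻¹' {0} ∩ G])
    (Nn := ∫ ω, X ω ∂μ[|O ⁻¹' {0} ∩ Gᶜ]) hf he hh hαg0 hαg1 hαng0 hαng1 hr0 hr1
    (mul_eq_sqrt_mul_of_eq_div hσpos.ne' hρg ?_) (mul_eq_sqrt_mul_of_eq_div hσnpos.ne' hρng ?_)
    ?_ ?_ ?_ ?_ ?_ hF hRF hE hRE hH hRH hmean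
  · rw [hαg, hμgO]
    exact covariance_cond_eq_of_binary hOm hO01 hG hμG hX2
  · rw [hαng, hμngO]
    exact covariance_cond_eq_of_binary hOm hO01 hG.compl hμGc hX2
  · rw [hμg, hαg, hμgO]
    exact integral_cond_eq_of_binary hOm hO01 hG hμG (hX2.integrable one_le_two)
  · rw [hμng, hαng, hμngO]
    exact integral_cond_eq_of_binary hOm hO01 hG.compl hμGc (hX2.integrable one_le_two)
  · rw [hrg, hαg, hαng, hμgO, hμngO, hμO]
    exact measureReal_mul_integral_cond_preimage_one hOm hO01 hG (hX2.integrable one_le_two)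
  · rw [hΔGroup, hLgGroup, hLngGroup, hL _ hpos0g.ne', hL _ hpos0ng.ne', hvar]
    ring
  · rw [hΔPop, hLgPop, hLngPop, hL _ hpos0g.ne', hL _ hpos0ng.ne', hvar]
    ring

/-- (Theorem 3.) Under equal unobserved-data variances and `μ_g^O > μ^O`,
`Δ^group_g > Δ^pop_g > 0` iff either `(F > R_F ∧ E > R_E ∧ H > R_H)` or
`(F > R_F ∧ E < R_E ∧ H < R_H)`. -/
theorem fairness_gap_comparison
    {Ω : Type*} [MeasurableSpace Ω] (μ : Measure Ω) [IsProbabilityMeasure μ]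
    (X O : Ω → ℝ) (G : Set Ω)
    (hXm : Measurable X) (hOm : Measurable O) (hG : MeasurableSet G)
    (hX2 : MemLp X 2 μ)
    (hO01 : ∀ ω, O ω = 0 ∨ O ω = 1)
    (αg αng μg μng μgO μngO μO σXG σXnG ρg ρng rg
      LgGroup LngGroup LgPop LngPop ΔGroup ΔPop F RF E RE H RH : ℝ)
    (f : ℝ → ℝ → ℝ → ℝ) (e : ℝ → ℝ) (h : ℝ → ℝ → ℝ → ℝ)
    (hαg : αg = ∫ ω, O ω ∂(μ[|G]))
    (hαng : αng = ∫ ω, O ω ∂(μ[|Gᶜ]))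
    (hμg : μg = ∫ ω, X ω ∂(μ[|G]))
    (hμng : μng = ∫ ω, X ω ∂(μ[|Gᶜ]))
    (hμgO : μgO = ∫ ω, X ω ∂(μ[|O ⁻¹' {1} ∩ G]))
    (hμngO : μngO = ∫ ω, X ω ∂(μ[|O ⁻¹' {1} ∩ Gᶜ]))
    (hμO : μO = ∫ ω, X ω ∂(μ[|O ⁻¹' {1}]))
    (hσXG : σXG = Real.sqrt (variance X (μ[|G])))
    (hσXnG : σXnG = Real.sqrt (variance X (μ[|Gᶜ])))
    (hρg : ρg = condCov (μ[|G]) O X / (Real.sqrt (αg * (1 - αg)) * σXG))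
    (hρng : ρng = condCov (μ[|Gᶜ]) O X / (Real.sqrt (αng * (1 - αng)) * σXnG))
    (hrg : rg = (μ G).toReal)
    (hLgGroup : LgGroup = ∫ ω, (μgO - X ω) ^ 2 ∂(μ[|O ⁻¹' {0} ∩ G]))
    (hLngGroup : LngGroup = ∫ ω, (μngO - X ω) ^ 2 ∂(μ[|O ⁻¹' {0} ∩ Gᶜ]))
    (hLgPop : LgPop = ∫ ω, (μO - X ω) ^ 2 ∂(μ[|O ⁻¹' {0} ∩ G]))
    (hLngPop : LngPop = ∫ ω, (μO - X ω) ^ 2 ∂(μ[|O ⁻¹' {0} ∩ Gᶜ]))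
    (hΔGroup : ΔGroup = LgGroup - LngGroup)
    (hΔPop : ΔPop = LgPop - LngPop)
    (hf : ∀ a r b, f a r b =
      2 * b * (1 - r) / Real.sqrt (a * (1 - a)) -
        Real.sqrt ((1 - a) / a) * (b * (1 - r) - a * r))
    (he : ∀ a, e a = Real.sqrt (a / (1 - a)))
    (hh : ∀ a r b, h a r b =
      (a * r + b * (1 - r)) / Real.sqrt (a * (1 - a)) -
        Real.sqrt ((1 - a) / a) * (b * (1 - r) - a * r))
    (hF : F = ρg * σXG * f αg rg αng + ρng * σXnG * f αng (1 - rg) αg)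
    (hRF : RF = ((1 - rg) * αng - rg * αg) * (μg - μng))
    (hE : E = ρg * σXG * e αg - ρng * σXnG * e αng)
    (hRE : RE = μg - μng)
    (hH : H = ρg * σXG * h αg rg αng + ρng * σXnG * h αng (1 - rg) αg)
    (hRH : RH = ((1 - rg) * αng - rg * αg) * (μg - μng))
    (hr0 : 0 < rg) (hr1 : rg < 1)
    (hαg0 : 0 < αg) (hαg1 : αg < 1)
    (hαng0 : 0 < αng) (hαng1 : αng < 1)
    (hσpos : 0 < σXG) (hσnpos : 0 < σXnG)
    (hpos1g : 0 < μ (O ⁻¹' {1} ∩ G)) (hpos0g : 0 < μ (O ⁻¹' {0} ∩ G))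
    (hpos1ng : 0 < μ (O ⁻¹' {1} ∩ Gᶜ)) (hpos0ng : 0 < μ (O ⁻¹' {0} ∩ Gᶜ))
    (hvar : variance X (μ[|O ⁻¹' {0} ∩ G]) = variance X (μ[|O ⁻¹' {0} ∩ Gᶜ]))
    (hmean : μgO > μO) :
    (ΔGroup > ΔPop ∧ ΔPop > 0) ↔
      (F > RF ∧ E > RE ∧ H > RH) ∨ (F > RF ∧ E < RE ∧ H < RH) :=
  fairness_gap_comparison_general μ X O G hOm hG hX2 hO01 αg αng μg μng μgO μngO μO σXG σXnG ρg ρng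
    rg LgGroup LngGroup LgPop LngPop ΔGroup ΔPop F RF E RE H RH f e h hαg hαng hμg hμng hμgO hμngO
    hμO hρg hρng hrg hLgGroup hLngGroup hLgPop hLngPop hΔGroup hΔPop hf he hh hF hRF hE hRE hH hRH
    hr0 hr1 hαg0 hαg1 hαng0 hαng1 hσpos hσnpos hpos1g hpos0g hpos1ng hpos0ng hvar hmean
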